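/- arXiv:1902.09946 — 5 statements merged into one kernel-verified Lean document; each statement's English description precedes it below -/
import Mathlib

section
/- For the randomized Kaczmarz method with row i sampled with probability ‖a_i‖²/‖A‖_F² and stepsize α ∈ (0,2), the iterates satisfy E[‖x^{k+1} − x*_{k+1}‖²] ≤ (1 − α(2−α)·λ_min^nz(AAᵀ)/‖A‖_F²)·E[‖x^k − x*_k‖²], where x*_k is the projection of x^k onto the solution set. -/
open Matrix Finset

/-- The smallest nonzero eigenvalue of a real square matrix. -/
noncomputable def lamMinNZ {k : ℕ} (M : Matrix (Fin k) (Fin k) ℝ) : ℝ :=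
  sInf {μ : ℝ | (∃ v : Fin k → ℝ, v ≠ 0 ∧ M.mulVec v = μ • v) ∧ μ ≠ 0}

/-- Kaczmarz iterates driven by a sequence of sampled row indices. -/
noncomputable def kacIter {m n : ℕ} (A : Matrix (Fin m) (Fin n) ℝ) (b : Fin m → ℝ)
    (α : ℝ) (x0 : Fin n → ℝ) : (k : ℕ) → (Fin k → Fin m) → (Fin n → ℝ)
  | 0, _ => x0
  | (k + 1), s =>
      let x := kacIter A b α x0 k (fun j => s j.castSucc)
      let i := s (Fin.last k)
      x - (α * ((A i ⬝ᵥ x - b i) / (A i ⬝ᵥ A i))) • A i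

/-
Fix `x = x^k` and write `e = x - x*_k`. Since `x*_k` is itself a solution, the distance from
`x^{k+1}` to its projection is at most `‖x^{k+1} - x*_k‖²`, and averaging the latter over the
sampled row gives exactly `‖e‖² - α(2-α)‖Ae‖²/‖A‖_F²`. Minimality of the projection makes `e`
orthogonal to `ker A`, so expanding `e` in an eigenbasis of `AᵀA` only involves eigenvectors
`v` with `Av ≠ 0`, whose eigenvalues are nonzero eigenvalues of `AAᵀ` (with eigenvector `Av`);
hence `‖Ae‖² ≥ λ_min^nz(AAᵀ)‖e‖²`. The weight of a sampled path factorizes, so averaging this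
one-step bound over the first `k` indices gives the claim.
-/
section DotProduct

variable {ι : Type*} [Fintype ι]

lemma dotProduct_self_nonneg {R : Type*} [Ring R] [LinearOrder R] [IsStrictOrderedRing R]
    (v : ι → R) : 0 ≤ v ⬝ᵥ v :=
  Finset.sum_nonneg fun i _ => mul_self_nonneg (v i)

lemma dotProduct_self_pos_iff {R : Type*} [Ring R] [LinearOrder R] [IsStrictOrderedRing R]
    {v : ι → R} : 0 < v ⬝ᵥ v ↔ v ≠ 0 :=
  (dotProduct_self_nonneg v).lt_iff_ne'.trans dotProduct_self_eq_zero.not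

lemma OrthonormalBasis.sum_dotProduct_mul_dotProduct
    (v : OrthonormalBasis ι ℝ (EuclideanSpace ℝ ι)) (x y : ι → ℝ) : ∑ j, (x ⬝ᵥ v j) * (v j ⬝ᵥ y) = x ⬝ᵥ y := by
  simpa [EuclideanSpace.inner_eq_star_dotProduct, dotProduct_comm] using
    v.sum_inner_mul_inner (WithLp.toLp 2 x) (WithLp.toLp 2 y)

lemma dotProduct_eq_zero_of_forall_le_sub_smul {e w : ι → ℝ}
    (h : ∀ t : ℝ, e ⬝ᵥ e ≤ (e - t • w) ⬝ᵥ (e - t • w)) : e ⬝ᵥ w = 0 := by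
  set s := e ⬝ᵥ w
  set q := w ⬝ᵥ w
  have hq : 0 ≤ q := dotProduct_self_nonneg w
  have hexpand : ∀ t : ℝ, (e - t • w) ⬝ᵥ (e - t • w) = e ⬝ᵥ e - 2 * t * s + t ^ 2 * q := by
    intro t
    simp only [sub_dotProduct, dotProduct_sub, smul_dotProduct, dotProduct_smul, smul_eq_mul,
      dotProduct_comm w e, s, q]
    ring
  -- at `t = s / (q + 1)` the quadratic gap equals `-s² (q + 2) / (q + 1)²`
  have key := h (s / (q + 1))
  rw [hexpand] at key
  have hgap : s ^ 2 * (q + 2) ≤ 0 := by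
    have : 0 ≤ (s / (q + 1)) ^ 2 * q - 2 * (s / (q + 1)) * s := by linarith
    field_simp at this
    nlinarith
  exact pow_eq_zero_iff two_ne_zero |>.mp (le_antisymm (by nlinarith) (sq_nonneg s))

lemma dotProduct_self_mul_sub_smul_self (a e : ι → ℝ) (α : ℝ) :
    (a ⬝ᵥ a) * ((e - (α * (a ⬝ᵥ e / a ⬝ᵥ a)) • a) ⬝ᵥ (e - (α * (a ⬝ᵥ e / a ⬝ᵥ a)) • a))
      = (a ⬝ᵥ a) * (e ⬝ᵥ e) - α * (2 - α) * (a ⬝ᵥ e) ^ 2 := by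
  rcases eq_or_ne a 0 with rfl | ha
  · simp
  have hq : a ⬝ᵥ a ≠ 0 := (dotProduct_self_pos_iff.mpr ha).ne'
  simp only [sub_dotProduct, dotProduct_sub, smul_dotProduct, dotProduct_smul, smul_eq_mul,
    dotProduct_comm a e]
  field_simp
  ring

end DotProduct

lemma lamMinNZ_le {k : ℕ} {M : Matrix (Fin k) (Fin k) ℝ} (hM : M.PosSemidef) {μ : ℝ}
    {v : Fin k → ℝ} (hv : v ≠ 0) (hMv : M *ᵥ v = μ • v) (hμ : μ ≠ 0) : lamMinNZ M ≤ μ := by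
  refine csInf_le ⟨0, ?_⟩ ⟨⟨v, hv, hMv⟩, hμ⟩
  rintro ν ⟨⟨u, hu, hMu⟩, -⟩
  have h := hM.dotProduct_mulVec_nonneg u
  rw [hMu, dotProduct_smul, smul_eq_mul, star_trivial] at h
  exact nonneg_of_mul_nonneg_right (by linarith [mul_comm ν (u ⬝ᵥ u)])
    (dotProduct_self_pos_iff.mpr hu)

section Rayleigh

variable {m n : ℕ} (A : Matrix (Fin m) (Fin n) ℝ)

lemma dotProduct_transpose_mul_mulVec (v w : Fin n → ℝ) :
    v ⬝ᵥ (Aᵀ * A) *ᵥ w = A *ᵥ v ⬝ᵥ A *ᵥ w := by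
  rw [← mulVec_mulVec, dotProduct_mulVec, vecMul_transpose]

lemma lamMinNZ_mul_transpose_mul_dotProduct_le {e : Fin n → ℝ}
    (he : ∀ w, A *ᵥ w = 0 → e ⬝ᵥ w = 0) :
    lamMinNZ (A * Aᵀ) * (e ⬝ᵥ e) ≤ A *ᵥ e ⬝ᵥ A *ᵥ e := by
  have hB : (Aᵀ * A).IsHermitian := by simpa using isHermitian_conjTranspose_mul_self A
  set v : Fin n → Fin n → ℝ := fun j => hB.eigenvectorBasis j
  set μ := hB.eigenvalues
  have hBv : ∀ j, (Aᵀ * A) *ᵥ v j = μ j • v j := hB.mulVec_eigenvectorBasis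
  set c : Fin n → ℝ := fun j => v j ⬝ᵥ e
  have hee : e ⬝ᵥ e = ∑ j, c j ^ 2 := by
    rw [← hB.eigenvectorBasis.sum_dotProduct_mul_dotProduct e e]
    exact sum_congr rfl fun j _ => by rw [dotProduct_comm, sq]
  have hAe : A *ᵥ e ⬝ᵥ A *ᵥ e = ∑ j, μ j * c j ^ 2 := by
    rw [← dotProduct_transpose_mul_mulVec,
      ← hB.eigenvectorBasis.sum_dotProduct_mul_dotProduct e]
    refine sum_congr rfl fun j _ => ?_
    have : v j ⬝ᵥ (Aᵀ * A) *ᵥ e = μ j * c j := by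
      rw [dotProduct_transpose_mul_mulVec, dotProduct_comm, ← dotProduct_transpose_mul_mulVec,
        hBv, dotProduct_smul, smul_eq_mul, dotProduct_comm]
    rw [this, dotProduct_comm e]
    ring
  rw [hee, hAe, mul_sum]
  refine sum_le_sum fun j _ => ?_
  by_cases hAv : A *ᵥ v j = 0
  · simp [c, dotProduct_comm (v j), he _ hAv]
  have hμ : μ j ≠ 0 := by
    intro h0
    have := dotProduct_transpose_mul_mulVec A (v j) (v j)
    rw [hBv, h0, zero_smul, dotProduct_zero] at this
    exact hAv (dotProduct_self_eq_zero.mp this.symm)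
  have hAAv : (A * Aᵀ) *ᵥ (A *ᵥ v j) = μ j • A *ᵥ v j := by
    rw [mulVec_mulVec, Matrix.mul_assoc, ← mulVec_mulVec, hBv, mulVec_smul]
  gcongr
  exact lamMinNZ_le (by simpa using posSemidef_self_mul_conjTranspose A) hAv hAAv hμ

end Rayleigh

lemma sum_fun_fin_succ {α M : Type*} [Fintype α] [AddCommMonoid M] {k : ℕ}
    (g : (Fin (k + 1) → α) → M) :
    ∑ s, g s = ∑ t : Fin k → α, ∑ i, g (Fin.snoc t i) := by
  rw [← (Fin.snocEquiv fun _ => α).sum_comp, Fintype.sum_prod_type, sum_comm]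
  rfl

lemma sub_dotProduct_eq_zero_of_forall_solution_le {m n : ℕ} {A : Matrix (Fin m) (Fin n) ℝ}
    {b : Fin m → ℝ} {x p : Fin n → ℝ} (hp : A *ᵥ p = b)
    (hmin : ∀ z, A *ᵥ z = b → (x - p) ⬝ᵥ (x - p) ≤ (x - z) ⬝ᵥ (x - z))
    {w : Fin n → ℝ} (hw : A *ᵥ w = 0) : (x - p) ⬝ᵥ w = 0 :=
  dotProduct_eq_zero_of_forall_le_sub_smul fun t => by
    simpa only [sub_add_eq_sub_sub] using
      hmin (p + t • w) (by rw [mulVec_add, mulVec_smul, hw, smul_zero, add_zero, hp])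

section Kaczmarz

variable {m n : ℕ} (A : Matrix (Fin m) (Fin n) ℝ) (b : Fin m → ℝ) (α : ℝ)

noncomputable def kacStep (i : Fin m) (x : Fin n → ℝ) : Fin n → ℝ :=
  x - (α * ((A i ⬝ᵥ x - b i) / (A i ⬝ᵥ A i))) • A i

lemma kacIter_snoc (x0 : Fin n → ℝ) {k : ℕ} (t : Fin k → Fin m) (i : Fin m) :
    kacIter A b α x0 (k + 1) (Fin.snoc t i) = kacStep A b α i (kacIter A b α x0 k t) := by
  simp [kacIter, kacStep]

lemma sum_mul_kacStep_sub_proj_le (hα0 : 0 ≤ α) (hα2 : α ≤ 2) (prob : Fin m → ℝ)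
    (hprob : ∀ i, prob i = (A i ⬝ᵥ A i) / (∑ j, A j ⬝ᵥ A j))
    (proj : (Fin n → ℝ) → (Fin n → ℝ))
    (hproj : ∀ x, A.mulVec (proj x) = b ∧
      ∀ z, A.mulVec z = b → (x - proj x) ⬝ᵥ (x - proj x) ≤ (x - z) ⬝ᵥ (x - z))
    (x : Fin n → ℝ) :
    ∑ i, prob i * ((kacStep A b α i x - proj (kacStep A b α i x)) ⬝ᵥ
          (kacStep A b α i x - proj (kacStep A b α i x)))
      ≤ (1 - α * (2 - α) * lamMinNZ (A * Aᵀ) / (∑ j, A j ⬝ᵥ A j)) *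
        ((x - proj x) ⬝ᵥ (x - proj x)) := by
  obtain rfl : prob = fun i => (A i ⬝ᵥ A i) / (∑ j, A j ⬝ᵥ A j) := funext hprob
  set F := ∑ j, A j ⬝ᵥ A j
  set e := x - proj x
  have hF : 0 ≤ F := sum_nonneg fun j _ => dotProduct_self_nonneg (A j)
  have hstep : ∀ i, kacStep A b α i x - proj x = e - (α * (A i ⬝ᵥ e / A i ⬝ᵥ A i)) • A i := by
    intro i
    have hb : b i = A i ⬝ᵥ proj x := by rw [← (hproj x).1]; rfl
    rw [kacStep, hb, ← dotProduct_sub, sub_right_comm]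
  have hray := lamMinNZ_mul_transpose_mul_dotProduct_le A
    fun _ => sub_dotProduct_eq_zero_of_forall_solution_le (hproj x).1 (hproj x).2
  calc _ ≤ ∑ i, (A i ⬝ᵥ A i) / F *
        ((kacStep A b α i x - proj x) ⬝ᵥ (kacStep A b α i x - proj x)) :=
        sum_le_sum fun i _ => mul_le_mul_of_nonneg_left ((hproj _).2 _ (hproj x).1)
          (div_nonneg (dotProduct_self_nonneg _) hF)
    _ = F / F * (e ⬝ᵥ e) - α * (2 - α) / F * (A *ᵥ e ⬝ᵥ A *ᵥ e) := by
        have hAe : A *ᵥ e ⬝ᵥ A *ᵥ e = ∑ i, (A i ⬝ᵥ e) ^ 2 :=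
          sum_congr rfl fun i _ => (sq _).symm
        rw [hAe, sum_div, sum_mul, mul_sum, ← sum_sub_distrib]
        refine sum_congr rfl fun i _ => ?_
        rw [hstep, div_mul_eq_mul_div, dotProduct_self_mul_sub_smul_self]
        ring
    _ ≤ e ⬝ᵥ e - α * (2 - α) / F * (lamMinNZ (A * Aᵀ) * (e ⬝ᵥ e)) := by
        gcongr
        exact mul_le_of_le_one_left (dotProduct_self_nonneg e) (div_self_le_one F)
    _ = _ := by ring

end Kaczmarz

theorem stmt6_general (m n : ℕ) (A : Matrix (Fin m) (Fin n) ℝ) (b : Fin m → ℝ)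
    (α : ℝ) (hα0 : 0 < α) (hα2 : α < 2)
    (prob : Fin m → ℝ)
    (hprob : ∀ i, prob i = (A i ⬝ᵥ A i) / (∑ j, A j ⬝ᵥ A j))
    (proj : (Fin n → ℝ) → (Fin n → ℝ))
    (hproj : ∀ x, A.mulVec (proj x) = b ∧
      ∀ z, A.mulVec z = b → (x - proj x) ⬝ᵥ (x - proj x) ≤ (x - z) ⬝ᵥ (x - z))
    (x0 : Fin n → ℝ) (k : ℕ) :
    (∑ s : Fin (k + 1) → Fin m, (∏ j, prob (s j)) *
        ((kacIter A b α x0 (k + 1) s - proj (kacIter A b α x0 (k + 1) s)) ⬝ᵥ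
          (kacIter A b α x0 (k + 1) s - proj (kacIter A b α x0 (k + 1) s))))
      ≤ (1 - α * (2 - α) * lamMinNZ (A * Aᵀ) / (∑ j, A j ⬝ᵥ A j)) *
        (∑ s : Fin k → Fin m, (∏ j, prob (s j)) *
          ((kacIter A b α x0 k s - proj (kacIter A b α x0 k s)) ⬝ᵥ
            (kacIter A b α x0 k s - proj (kacIter A b α x0 k s)))) := by
  have hprob_nonneg : ∀ i, 0 ≤ prob i := fun i => hprob i ▸
    div_nonneg (dotProduct_self_nonneg _) (sum_nonneg fun j _ => dotProduct_self_nonneg _)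
  rw [sum_fun_fin_succ, mul_sum]
  refine sum_le_sum fun t _ => ?_
  simp only [kacIter_snoc, Fin.prod_univ_castSucc, Fin.snoc_castSucc, Fin.snoc_last]
  simp_rw [mul_assoc (∏ j, prob (t j)), ← mul_sum]
  rw [mul_left_comm]
  exact mul_le_mul_of_nonneg_left
    (sum_mul_kacStep_sub_proj_le A b α hα0.le hα2.le prob hprob proj hproj _)
    (prod_nonneg fun j _ => hprob_nonneg _)

theorem stmt6 (m n : ℕ) (A : Matrix (Fin m) (Fin n) ℝ) (b : Fin m → ℝ)
    (hrows : ∀ i, A i ≠ 0) (hcons : ∃ z, A.mulVec z = b)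
    (α : ℝ) (hα0 : 0 < α) (hα2 : α < 2)
    (prob : Fin m → ℝ)
    (hprob : ∀ i, prob i = (A i ⬝ᵥ A i) / (∑ j, A j ⬝ᵥ A j))
    (proj : (Fin n → ℝ) → (Fin n → ℝ))
    (hproj : ∀ x, A.mulVec (proj x) = b ∧
      ∀ z, A.mulVec z = b → (x - proj x) ⬝ᵥ (x - proj x) ≤ (x - z) ⬝ᵥ (x - z))
    (x0 : Fin n → ℝ) (k : ℕ) :
    (∑ s : Fin (k + 1) → Fin m, (∏ j, prob (s j)) *
        ((kacIter A b α x0 (k + 1) s - proj (kacIter A b α x0 (k + 1) s)) ⬝ᵥ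
          (kacIter A b α x0 (k + 1) s - proj (kacIter A b α x0 (k + 1) s))))
      ≤ (1 - α * (2 - α) * lamMinNZ (A * Aᵀ) / (∑ j, A j ⬝ᵥ A j)) *
        (∑ s : Fin k → Fin m, (∏ j, prob (s j)) *
          ((kacIter A b α x0 k s - proj (kacIter A b α x0 k s)) ⬝ᵥ
            (kacIter A b α x0 k s - proj (kacIter A b α x0 k s)))) :=
  stmt6_general m n A b α hα0 hα2 prob hprob proj hproj x0 k
end

section
/- Under the same sampling setup, E_J[(Σ_{i∈J} ω_i·a_i a_iᵀ/‖a_i‖²)²] ⪯ ω_max²·λ_max^block·W, where λ_max^block = max over samplings J of λ_max(A_Jᵀ·diag(1/‖a_i‖², i∈J)·A_J) and W = Aᵀ·diag(p_i/‖a_i‖²)·A. -/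
/-! With `B_J = ∑_{i ∈ J} aᵢaᵢᵀ/‖aᵢ‖²` and `M_J` its `ω`-weighted analogue, we have
`0 ⪯ M_J ⪯ |ω_max| B_J` and `B_J ⪯ λ_max^block I` whenever `P J ≠ 0`. Hence the spectrum of `M_J`
lies in `[0, c]` with `c = |ω_max| λ_max^block`, and since `x² ≤ c x` there, the functional calculus
gives `M_J² ⪯ c M_J ⪯ ω_max² λ_max^block B_J`. Averaging over `J` turns `∑_J P_J B_J` into `W`. -/

open Matrix Finset

/-- The largest eigenvalue of a real square matrix. -/
noncomputable def lamMax {n : ℕ} (M : Matrix (Fin n) (Fin n) ℝ) : ℝ :=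
  sSup {μ : ℝ | ∃ v : Fin n → ℝ, v ≠ 0 ∧ M.mulVec v = μ • v}

open scoped MatrixOrder

section CFC

variable {A : Type*} [TopologicalSpace A] [Ring A] [StarRing A] [PartialOrder A]
  [StarOrderedRing A] [Algebra ℝ A] [ContinuousFunctionalCalculus ℝ A IsSelfAdjoint]
  [NonnegSpectrumClass ℝ A]

theorem mul_self_le_smul_of_nonneg_of_le_algebraMap {a : A} {c : ℝ} (ha : 0 ≤ a)
    (hac : a ≤ algebraMap ℝ A c) : a * a ≤ c • a := by
  have hspec := (le_algebraMap_iff_spectrum_le (R := ℝ)).mp hac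
  calc a * a = cfc (fun x : ℝ => x * x) a := by rw [cfc_mul _ _ a, cfc_id' ℝ a]
    _ ≤ cfc (fun x : ℝ => c * x) a :=
      cfc_mono fun x hx => mul_le_mul_of_nonneg_right (hspec x hx) (spectrum_nonneg_of_nonneg ha hx)
    _ = c • a := cfc_const_mul_id c a

theorem mul_self_le_smul_of_le_smul [PosSMulMono ℝ A] {a b : A} {c l : ℝ} (ha : 0 ≤ a)
    (hab : a ≤ c • b) (hb : b ≤ algebraMap ℝ A l) (hc : 0 ≤ c) (hl : 0 ≤ l) :
    a * a ≤ (c ^ 2 * l) • b := by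
  have hal : a ≤ algebraMap ℝ A (c * l) := by
    calc a ≤ c • b := hab
      _ ≤ c • algebraMap ℝ A l := smul_le_smul_of_nonneg_left hb hc
      _ = algebraMap ℝ A (c * l) := by rw [Algebra.smul_def, map_mul]
  calc a * a ≤ (c * l) • a := mul_self_le_smul_of_nonneg_of_le_algebraMap ha hal
    _ ≤ (c * l) • (c • b) := smul_le_smul_of_nonneg_left hab (mul_nonneg hc hl)
    _ = (c ^ 2 * l) • b := by rw [smul_smul, mul_right_comm, sq]

end CFC

theorem setOf_mulVec_eq_smul_eq_spectrum {K ι : Type*} [Field K] [Fintype ι] [DecidableEq ι]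
    (M : Matrix ι ι K) : {μ : K | ∃ v : ι → K, v ≠ 0 ∧ M *ᵥ v = μ • v} = spectrum K M := by
  ext μ
  rw [← spectrum_toLin', ← Module.End.hasEigenvalue_iff_mem_spectrum,
    Module.End.hasEigenvalue_iff, Submodule.ne_bot_iff]
  simp [and_comm]

section lamMax

variable {n : ℕ} {M : Matrix (Fin n) (Fin n) ℝ}

theorem lamMax_eq_sSup_spectrum (M : Matrix (Fin n) (Fin n) ℝ) :
    lamMax M = sSup (spectrum ℝ M) := by
  rw [lamMax, setOf_mulVec_eq_smul_eq_spectrum]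

theorem le_lamMax_of_mem_spectrum {μ : ℝ} (hμ : μ ∈ spectrum ℝ M) : μ ≤ lamMax M :=
  lamMax_eq_sSup_spectrum M ▸ le_csSup finite_real_spectrum.bddAbove hμ

theorem lamMax_nonneg (hM : 0 ≤ M) : 0 ≤ lamMax M :=
  lamMax_eq_sSup_spectrum M ▸ Real.sSup_nonneg fun _ hμ => spectrum_nonneg_of_nonneg hM hμ

theorem le_algebraMap_of_lamMax_le (hM : M.IsHermitian) {r : ℝ} (h : lamMax M ≤ r) :
    M ≤ algebraMap ℝ _ r :=
  le_algebraMap_of_spectrum_le (fun _ hμ => (le_lamMax_of_mem_spectrum hμ).trans h) hM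

end lamMax

section Gram

variable {ι n : Type*} [Fintype n]

theorem sum_smul_vecMulVec_nonneg (s : Finset ι) (a : ι → n → ℝ) {c : ι → ℝ}
    (hc : ∀ i ∈ s, 0 ≤ c i) : 0 ≤ ∑ i ∈ s, c i • vecMulVec (a i) (a i) :=
  nonneg_iff_posSemidef.mpr <| posSemidef_sum s fun i hi =>
    (posSemidef_vecMulVec_self_star (a i)).smul (hc i hi)

theorem sum_smul_vecMulVec_mono (s : Finset ι) (a : ι → n → ℝ) {c d : ι → ℝ}
    (hcd : ∀ i ∈ s, c i ≤ d i) :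
    ∑ i ∈ s, c i • vecMulVec (a i) (a i) ≤ ∑ i ∈ s, d i • vecMulVec (a i) (a i) := by
  rw [← sub_nonneg, ← sum_sub_distrib]
  simp_rw [← sub_smul]
  exact sum_smul_vecMulVec_nonneg s a fun i hi => sub_nonneg.mpr (hcd i hi)

end Gram

theorem le_sSup_setOf_exists_eq {α : Type*} [Finite α] {q : α → Prop} (f : α → ℝ) {a : α}
    (ha : q a) : f a ≤ sSup {r | ∃ b, q b ∧ r = f b} :=
  le_csSup ((Set.finite_range f).subset (by rintro _ ⟨b, -, rfl⟩; exact ⟨b, rfl⟩)).bddAbove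
    ⟨a, ha, rfl⟩

theorem sum_marginal_smul {ι E : Type*} [Fintype ι] [DecidableEq ι] [AddCommMonoid E] [Module ℝ E]
    (P : Finset ι → ℝ) (x : ι → E) :
    ∑ i, (∑ J ∈ univ.filter (fun J : Finset ι => i ∈ J), P J) • x i
      = ∑ J, P J • ∑ i ∈ J, x i := by
  simp_rw [sum_smul, smul_sum, sum_filter]
  rw [sum_comm]
  refine sum_congr rfl fun J _ => ?_
  rw [← sum_filter, filter_mem_eq_inter, univ_inter]

theorem stmt8_general (m n : ℕ) (A : Matrix (Fin m) (Fin n) ℝ)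
    (P : Finset (Fin m) → ℝ) (hP : ∀ J, 0 ≤ P J)
    (p : Fin m → ℝ)
    (hp : ∀ i, p i = ∑ J ∈ Finset.univ.filter (fun J : Finset (Fin m) => i ∈ J), P J)
    (w : Fin m → ℝ) (wmin wmax : ℝ) (hwmin : 0 < wmin)
    (hw : ∀ i, wmin ≤ w i ∧ w i ≤ wmax)
    (lb : ℝ)
    (hlb : lb = sSup {r : ℝ | ∃ J : Finset (Fin m), P J ≠ 0 ∧
      r = lamMax (∑ i ∈ J, ((A i ⬝ᵥ A i)⁻¹) • vecMulVec (A i) (A i))}) :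
    ((wmax ^ 2 * lb) • (∑ i : Fin m, (p i / (A i ⬝ᵥ A i)) • vecMulVec (A i) (A i)) -
      ∑ J : Finset (Fin m), P J •
        ((∑ i ∈ J, (w i / (A i ⬝ᵥ A i)) • vecMulVec (A i) (A i)) *
          (∑ i ∈ J, (w i / (A i ⬝ᵥ A i)) • vecMulVec (A i) (A i)))).PosSemidef := by
  set B := fun J : Finset (Fin m) => ∑ i ∈ J, ((A i ⬝ᵥ A i)⁻¹) • vecMulVec (A i) (A i)
  set M := fun J : Finset (Fin m) => ∑ i ∈ J, (w i / (A i ⬝ᵥ A i)) • vecMulVec (A i) (A i)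
  have hd : ∀ i, 0 ≤ (A i ⬝ᵥ A i)⁻¹ := fun i => inv_nonneg.mpr (dotProduct_self_star_nonneg (A i))
  have hB : ∀ J, 0 ≤ B J := fun J => sum_smul_vecMulVec_nonneg J A fun i _ => hd i
  have hM : ∀ J, 0 ≤ M J := fun J => sum_smul_vecMulVec_nonneg J A fun i _ =>
    div_nonneg (hwmin.le.trans (hw i).1) (dotProduct_self_star_nonneg (A i))
  have hMB : ∀ J, M J ≤ |wmax| • B J := fun J => by
    simp only [M, B, smul_sum, smul_smul]
    exact sum_smul_vecMulVec_mono J A fun i _ =>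
      mul_le_mul_of_nonneg_right ((hw i).2.trans (le_abs_self wmax)) (hd i)
  have hBlb : ∀ J, P J ≠ 0 → B J ≤ algebraMap ℝ _ lb := fun J hJ =>
    le_algebraMap_of_lamMax_le (nonneg_iff_posSemidef.mp (hB J)).isHermitian <|
      hlb ▸ le_sSup_setOf_exists_eq (fun J => lamMax (B J)) hJ
  have hlb0 : 0 ≤ lb :=
    hlb ▸ Real.sSup_nonneg (by rintro _ ⟨J, -, rfl⟩; exact lamMax_nonneg (hB J))
  have hW : ∑ i : Fin m, (p i / (A i ⬝ᵥ A i)) • vecMulVec (A i) (A i) = ∑ J, P J • B J := by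
    simp_rw [div_eq_mul_inv, ← smul_smul, hp]
    exact sum_marginal_smul P _
  rw [← le_iff, hW, smul_sum]
  refine sum_le_sum fun J _ => ?_
  rcases eq_or_ne (P J) 0 with hJ | hJ
  · simp [hJ]
  rw [smul_comm]
  refine smul_le_smul_of_nonneg_left ?_ (hP J)
  rw [← sq_abs]
  exact mul_self_le_smul_of_le_smul (hM J) (hMB J) (hBlb J hJ) (abs_nonneg _) hlb0

theorem stmt8 (m n : ℕ) (A : Matrix (Fin m) (Fin n) ℝ) (hrows : ∀ i, A i ≠ 0)
    (P : Finset (Fin m) → ℝ) (hP : ∀ J, 0 ≤ P J) (hP1 : ∑ J : Finset (Fin m), P J = 1)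
    (p : Fin m → ℝ)
    (hp : ∀ i, p i = ∑ J ∈ Finset.univ.filter (fun J : Finset (Fin m) => i ∈ J), P J)
    (w : Fin m → ℝ) (wmin wmax : ℝ) (hwmin : 0 < wmin) (hwmax : wmax < 1)
    (hw : ∀ i, wmin ≤ w i ∧ w i ≤ wmax)
    (lb : ℝ)
    (hlb : lb = sSup {r : ℝ | ∃ J : Finset (Fin m), P J ≠ 0 ∧
      r = lamMax (∑ i ∈ J, ((A i ⬝ᵥ A i)⁻¹) • vecMulVec (A i) (A i))}) :
    ((wmax ^ 2 * lb) • (∑ i : Fin m, (p i / (A i ⬝ᵥ A i)) • vecMulVec (A i) (A i)) -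
      ∑ J : Finset (Fin m), P J •
        ((∑ i ∈ J, (w i / (A i ⬝ᵥ A i)) • vecMulVec (A i) (A i)) *
          (∑ i ∈ J, (w i / (A i ⬝ᵥ A i)) • vecMulVec (A i) (A i)))).PosSemidef :=
  stmt8_general m n A P hP p hp w wmin wmax hwmin hw lb hlb
end

section
/- For the one-step recursion of RBK with uniform weights 1/τ, normalized rows, and a sampling with p_i = τ/m for all i, the conditional expectation satisfies E[x^{k+1} − x* | x^k] = (I_n − (α_k/m)·AᵀA)(x^k − x*) for any solution x* of Ax = b. -/
/-! The expected update is computed by exchanging the sum over subsets `J` with the sum over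
rows `i ∈ J`: row `i` is then weighted by its inclusion probability `τ / m`, which cancels the
step normalization `1 / τ`. Since `b = A x*`, the residual of row `i` is `a_iᵀ (x - x*)`, and
`∑ i, (a_iᵀ (x - x*)) a_i = AᵀA (x - x*)`. -/

open Matrix Finset

theorem Finset.sum_smul_sum_mem_eq_sum_inclusion_smul {ι R M : Type*} [Fintype ι]
    [DecidableEq ι] [Semiring R] [AddCommMonoid M] [Module R M]
    (P : Finset ι → R) (v : ι → M) :
    ∑ J, P J • ∑ i ∈ J, v i = ∑ i, (∑ J ∈ univ.filter (fun J => i ∈ J), P J) • v i := by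
  have hJ : ∀ J : Finset ι, ∑ i ∈ J, v i = ∑ i, if i ∈ J then v i else 0 := fun J => by
    rw [← sum_filter, filter_mem_eq_inter, univ_inter]
  simp only [hJ, smul_sum, smul_ite, smul_zero]
  rw [sum_comm]
  simp only [← sum_filter, sum_smul]

theorem Matrix.transpose_mul_self_mulVec {m n R : Type*} [Fintype m] [Fintype n]
    [CommSemiring R] (A : Matrix m n R) (y : n → R) :
    (Aᵀ * A) *ᵥ y = ∑ i, (A i ⬝ᵥ y) • A i := by
  rw [← mulVec_mulVec, mulVec_transpose, vecMul_eq_sum]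
  rfl

theorem stmt14_general (m n τ : ℕ) (hτ : 0 < τ)
    (A : Matrix (Fin m) (Fin n) ℝ)
    (b : Fin m → ℝ) (xstar : Fin n → ℝ) (hxs : A.mulVec xstar = b)
    (P : Finset (Fin m) → ℝ) (hP1 : ∑ J : Finset (Fin m), P J = 1)
    (hp : ∀ i : Fin m,
      (∑ J ∈ Finset.univ.filter (fun J : Finset (Fin m) => i ∈ J), P J) = (τ : ℝ) / m)
    (α : ℝ) (x : Fin n → ℝ) :
    (∑ J : Finset (Fin m), P J •
        ((x - (α / τ) • ∑ i ∈ J, (A i ⬝ᵥ x - b i) • A i) - xstar))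
      = (x - xstar) - (α / m) • (Aᵀ * A).mulVec (x - xstar) := by
  have hres : ∀ i, A i ⬝ᵥ x - b i = A i ⬝ᵥ (x - xstar) := fun i => by
    rw [← hxs, dotProduct_sub]
    rfl
  calc (∑ J, P J • ((x - (α / τ) • ∑ i ∈ J, (A i ⬝ᵥ x - b i) • A i) - xstar))
      = (∑ J, P J) • (x - xstar) - (α / τ) • ∑ J, P J • ∑ i ∈ J, (A i ⬝ᵥ x - b i) • A i := by
        simp only [sub_right_comm x, smul_sub, sum_sub_distrib, sum_smul, smul_sum,
          smul_comm (α / τ)]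
    _ = (x - xstar) - (α / τ) • ∑ i, ((τ : ℝ) / m) • (A i ⬝ᵥ (x - xstar)) • A i := by
        simp only [hP1, one_smul, sum_smul_sum_mem_eq_sum_inclusion_smul, hp, hres]
    _ = (x - xstar) - (α / m) • (Aᵀ * A) *ᵥ (x - xstar) := by
        rw [← smul_sum, smul_smul, transpose_mul_self_mulVec,
          div_mul_div_cancel₀ (Nat.cast_ne_zero.mpr hτ.ne')]

theorem stmt14 (m n τ : ℕ) (hm : 0 < m) (hτ : 0 < τ)
    (A : Matrix (Fin m) (Fin n) ℝ) (hnorm : ∀ i, A i ⬝ᵥ A i = 1)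
    (b : Fin m → ℝ) (xstar : Fin n → ℝ) (hxs : A.mulVec xstar = b)
    (P : Finset (Fin m) → ℝ) (hP : ∀ J, 0 ≤ P J) (hP1 : ∑ J : Finset (Fin m), P J = 1)
    (hp : ∀ i : Fin m,
      (∑ J ∈ Finset.univ.filter (fun J : Finset (Fin m) => i ∈ J), P J) = (τ : ℝ) / m)
    (α : ℝ) (x : Fin n → ℝ) :
    (∑ J : Finset (Fin m), P J •
        ((x - (α / τ) • ∑ i ∈ J, (A i ⬝ᵥ x - b i) • A i) - xstar))
      = (x - xstar) - (α / m) • (Aᵀ * A).mulVec (x - xstar) :=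
  stmt14_general m n τ hτ A b xstar hxs P hP1 hp α x
end

section
/- Let 0 < ℓ < u and G symmetric with spectrum in [ℓ, u]. For the Chebyshev-based product P_k(G) = Π_{j=0}^{k−1}(I − α_j G) with stepsizes α_j⁻¹ = ((u+ℓ) + (u−ℓ)cos((2j+1)π/(2k)))/2, the spectral norm satisfies ‖P_k(G)‖ ≤ 2·((√u − √ℓ)/(√u + √ℓ))^k. -/
/-!
Writing `c_j = cos ((2j+1)π/(2k))` for the roots of `T_k` and `x(μ) = (2μ - u - ℓ)/(u - ℓ)`,
each factor is `1 - α_j μ = (x(μ) - c_j)/(x(0) - c_j)`, so the product of the factors is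
`T_k(x(μ)) / T_k(x(0))`. On `[ℓ, u]` the numerator is at most `1` in absolute value, while
`-x(0) = (u + ℓ)/(u - ℓ) = cosh t` with `exp t = (√u + √ℓ)/(√u - √ℓ)`, so
`|T_k(x(0))| = cosh (k t) ≥ exp (k t) / 2`. The matrix product is this scalar function of `G`
under the functional calculus, and `G` is orthogonally diagonalizable with spectrum in `[ℓ, u]`.
-/

open Matrix Finset Real

namespace Polynomial.Chebyshev

theorem T_real_eq_prod (n : ℕ) :
    T ℝ n = Polynomial.C (2 ^ (n - 1)) *
      ∏ j ∈ range n, (X - Polynomial.C (cos ((2 * j + 1) * π / (2 * n)))) := by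
  have hinj := (range n).nodup_map_iff_injOn.mp (roots_T_real_nodup n)
  have hroots : Multiset.card (T ℝ n).roots = (T ℝ n).natDegree := by
    rw [roots_T_real, Finset.card_val, Finset.card_image_of_injOn hinj, card_range, natDegree_T,
      Int.natAbs_natCast]
  conv_lhs => rw [← C_leadingCoeff_mul_prod_multiset_X_sub_C hroots]
  rw [roots_T_real, Finset.image_val_of_injOn hinj, Multiset.map_map, leadingCoeff_T,
    Int.natAbs_natCast]
  rfl

theorem T_real_eval_eq_prod (n : ℕ) (x : ℝ) :
    (T ℝ n).eval x = 2 ^ (n - 1) * ∏ j ∈ range n, (x - cos ((2 * j + 1) * π / (2 * n))) := by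
  conv_lhs => rw [T_real_eq_prod]
  simp [eval_prod]

theorem pow_div_two_le_abs_eval_T_real (n : ℕ) {z : ℝ} (hz : 0 < z) :
    z ^ n / 2 ≤ |(T ℝ n).eval ((z + z⁻¹) / 2)| := by
  have hcosh : (z + z⁻¹) / 2 = cosh (log z) := by
    rw [cosh_eq, exp_neg, exp_log hz]
  rw [hcosh, T_real_cosh, cosh_eq, abs_of_pos (by positivity), Int.cast_natCast, exp_nat_mul,
    exp_log hz]
  linarith [exp_pos (-(n * log z))]

end Polynomial.Chebyshev

open Polynomial Polynomial.Chebyshev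

theorem list_prod_map_one_sub_smul_eq_cfc {A : Type*} [Ring A] [StarRing A] [Algebra ℝ A]
    [TopologicalSpace A] [ContinuousFunctionalCalculus ℝ A IsSelfAdjoint] {a : A}
    (ha : IsSelfAdjoint a) (α : ℕ → ℝ) (k : ℕ) :
    ((List.range k).map (fun j => 1 - α j • a)).prod =
      cfc (fun x => ∏ j ∈ range k, (1 - α j * x)) a := by
  induction k with
  | zero => simp [cfc_const_one ℝ a]
  | succ k ih =>
    simp only [List.range_succ, List.map_append, List.prod_append, ih, List.map_cons,
      List.map_nil, List.prod_cons, List.prod_nil, mul_one, prod_range_succ]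
    rw [cfc_mul _ _ a, cfc_sub _ _ a, cfc_const_one ℝ a, cfc_const_mul _ _ a, cfc_id' ℝ a]

namespace Matrix

variable {m n R : Type*} [Fintype m] [Fintype n]

theorem mulVec_dotProduct_mulVec_self_of_transpose_mul_self [CommSemiring R] [DecidableEq n]
    {U : Matrix m n R} (hU : Uᵀ * U = 1) (x : n → R) : (U *ᵥ x) ⬝ᵥ (U *ᵥ x) = x ⬝ᵥ x := by
  rw [dotProduct_mulVec, ← mulVec_transpose, mulVec_mulVec, hU, one_mulVec]

theorem diagonal_mulVec_dotProduct_self_le [CommRing R] [LinearOrder R] [IsStrictOrderedRing R]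
    [DecidableEq n] {d : n → R} {c : R} (hd : ∀ i, |d i| ≤ c) (w : n → R) :
    (diagonal d *ᵥ w) ⬝ᵥ (diagonal d *ᵥ w) ≤ c ^ 2 * (w ⬝ᵥ w) := by
  simp only [mulVec_diagonal, dotProduct, mul_sum]
  refine sum_le_sum fun i _ => ?_
  have : d i ^ 2 ≤ c ^ 2 := sq_le_sq' (abs_le.mp (hd i)).1 (abs_le.mp (hd i)).2
  nlinarith [mul_self_nonneg (w i)]

variable [DecidableEq n] {A : Matrix n n ℝ}

theorem IsHermitian.eigenvalues_mem (hA : A.IsHermitian) {s : Set ℝ}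
    (hs : ∀ μ : ℝ, (∃ v : n → ℝ, v ≠ 0 ∧ A *ᵥ v = μ • v) → μ ∈ s) (i : n) :
    hA.eigenvalues i ∈ s :=
  hs _ ⟨hA.eigenvectorBasis i, fun h => hA.eigenvectorBasis.orthonormal.ne_zero i
    (by ext j; exact congrFun h j), hA.mulVec_eigenvectorBasis i⟩

theorem IsHermitian.cfc_mulVec_dotProduct_self_le (hA : A.IsHermitian) (f : ℝ → ℝ) {c : ℝ}
    (hf : ∀ i, |f (hA.eigenvalues i)| ≤ c) (v : n → ℝ) :
    (cfc f A *ᵥ v) ⬝ᵥ (cfc f A *ᵥ v) ≤ c ^ 2 * (v ⬝ᵥ v) := by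
  set U : Matrix n n ℝ := ↑hA.eigenvectorUnitary
  have hU : Uᵀ * U = 1 := mem_unitaryGroup_iff'.mp hA.eigenvectorUnitary.2
  have hUt : Uᵀᵀ * Uᵀ = 1 := by
    rw [transpose_transpose]; exact mem_unitaryGroup_iff.mp hA.eigenvectorUnitary.2
  have hcfc : cfc f A = U * diagonal (f ∘ hA.eigenvalues) * Uᵀ := by
    rw [hA.cfc_eq, IsHermitian.cfc, Unitary.conjStarAlgAut_apply]
    rfl
  rw [hcfc, ← mulVec_mulVec, ← mulVec_mulVec,
    mulVec_dotProduct_mulVec_self_of_transpose_mul_self hU,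
    ← mulVec_dotProduct_mulVec_self_of_transpose_mul_self hUt v]
  exact diagonal_mulVec_dotProduct_self_le hf _

end Matrix

section ChebyshevStepsizes

variable {k : ℕ} {ℓ u : ℝ} {α : ℕ → ℝ}

theorem prod_one_sub_mul_eq_eval_T_div_eval_T (hℓ : 0 < ℓ) (hlu : ℓ < u)
    (hα : ∀ j < k, α j =
      2 / ((u + ℓ) + (u - ℓ) * Real.cos ((2 * j + 1) * Real.pi / (2 * k)))) (μ : ℝ) :
    ∏ j ∈ range k, (1 - α j * μ) =
      (T ℝ k).eval ((2 * μ - u - ℓ) / (u - ℓ)) / (T ℝ k).eval (-((u + ℓ) / (u - ℓ))) := by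
  have hul : u - ℓ ≠ 0 := sub_ne_zero.mpr hlu.ne'
  have prod_eq (x : ℝ) : ∏ j ∈ range k, (x - cos ((2 * j + 1) * π / (2 * k))) =
      (T ℝ k).eval x / 2 ^ (k - 1) := by
    rw [T_real_eval_eq_prod, mul_div_cancel_left₀ _ (by positivity)]
  have factor_eq : ∀ j ∈ range k, 1 - α j * μ =
      ((2 * μ - u - ℓ) / (u - ℓ) - cos ((2 * j + 1) * π / (2 * k))) /
        (-((u + ℓ) / (u - ℓ)) - cos ((2 * j + 1) * π / (2 * k))) := by
    intro j hj
    have hc := neg_one_le_cos ((2 * j + 1) * π / (2 * k))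
    rw [hα j (mem_range.mp hj)]
    generalize cos ((2 * j + 1) * π / (2 * k)) = c at hc ⊢
    have hpos : (u + ℓ) + (u - ℓ) * c ≠ 0 := by nlinarith
    have hneg : -(u + ℓ) - (u - ℓ) * c ≠ 0 := by nlinarith
    field_simp
    ring
  rw [prod_congr rfl factor_eq, prod_div_distrib, prod_eq, prod_eq,
    div_div_div_cancel_right₀ (by positivity)]

theorem abs_prod_one_sub_mul_le (hℓ : 0 < ℓ) (hlu : ℓ < u)
    (hα : ∀ j < k, α j =
      2 / ((u + ℓ) + (u - ℓ) * Real.cos ((2 * j + 1) * Real.pi / (2 * k))))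
    {μ : ℝ} (hμ : μ ∈ Set.Icc ℓ u) :
    |∏ j ∈ range k, (1 - α j * μ)| ≤
      2 * ((Real.sqrt u - Real.sqrt ℓ) / (Real.sqrt u + Real.sqrt ℓ)) ^ k := by
  have hul : 0 < u - ℓ := sub_pos.mpr hlu
  have hsℓ : 0 < √ℓ := sqrt_pos.mpr hℓ
  have hsu : √ℓ < √u := sqrt_lt_sqrt hℓ.le hlu
  set z := (√u + √ℓ) / (√u - √ℓ) with hz
  have hzpos : 0 < z := div_pos (by positivity) (by linarith)
  have hcenter : (u + ℓ) / (u - ℓ) = (z + z⁻¹) / 2 := by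
    have h1 : √u - √ℓ ≠ 0 := by linarith
    have h2 : √u + √ℓ ≠ 0 := by positivity
    rw [hz, inv_div]
    field_simp
    linear_combination 4 * ℓ * sq_sqrt (hℓ.trans hlu).le - 4 * u * sq_sqrt hℓ.le
  have hnum : |(T ℝ k).eval ((2 * μ - u - ℓ) / (u - ℓ))| ≤ 1 := by
    refine abs_eval_T_real_le_one k (abs_le.mpr ⟨?_, ?_⟩)
    · rw [le_div_iff₀ hul]; linarith [hμ.1]
    · rw [div_le_iff₀ hul]; linarith [hμ.2]
  have hden : z ^ k / 2 ≤ |(T ℝ k).eval (-((u + ℓ) / (u - ℓ)))| := by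
    rw [T_eval_neg, abs_mul, abs_unit_intCast, one_mul, hcenter]
    exact pow_div_two_le_abs_eval_T_real k hzpos
  rw [prod_one_sub_mul_eq_eval_T_div_eval_T hℓ hlu hα, abs_div]
  calc _ ≤ 1 / (z ^ k / 2) := div_le_div₀ zero_le_one hnum (by positivity) hden
    _ = _ := by
      have h1 : √u - √ℓ ≠ 0 := by linarith
      have h2 : √u + √ℓ ≠ 0 := by positivity
      rw [hz, div_pow, div_pow]
      field_simp

end ChebyshevStepsizes

theorem stmt15_general (msz k : ℕ) (ℓ u : ℝ) (hℓ : 0 < ℓ) (hlu : ℓ < u)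
    (G : Matrix (Fin msz) (Fin msz) ℝ) (hG : G.IsSymm)
    (hspec : ∀ μ : ℝ, (∃ v : Fin msz → ℝ, v ≠ 0 ∧ G.mulVec v = μ • v) →
      μ ∈ Set.Icc ℓ u)
    (α : ℕ → ℝ)
    (hα : ∀ j < k, α j =
      2 / ((u + ℓ) + (u - ℓ) * Real.cos ((2 * j + 1) * Real.pi / (2 * k))))
    (Pm : Matrix (Fin msz) (Fin msz) ℝ)
    (hPm : Pm = ((List.range k).map
      (fun j => (1 : Matrix (Fin msz) (Fin msz) ℝ) - α j • G)).prod)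
    (v : Fin msz → ℝ) :
    (Pm.mulVec v) ⬝ᵥ (Pm.mulVec v) ≤
      (2 * ((Real.sqrt u - Real.sqrt ℓ) / (Real.sqrt u + Real.sqrt ℓ)) ^ k) ^ 2 *
        (v ⬝ᵥ v) := by
  have hG' : G.IsHermitian := hG
  rw [hPm, list_prod_map_one_sub_smul_eq_cfc hG'.isSelfAdjoint]
  exact hG'.cfc_mulVec_dotProduct_self_le _
    (fun i => abs_prod_one_sub_mul_le hℓ hlu hα (hG'.eigenvalues_mem hspec i)) v

theorem stmt15 (msz k : ℕ) (hk : 0 < k) (ℓ u : ℝ) (hℓ : 0 < ℓ) (hlu : ℓ < u)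
    (G : Matrix (Fin msz) (Fin msz) ℝ) (hG : G.IsSymm)
    (hspec : ∀ μ : ℝ, (∃ v : Fin msz → ℝ, v ≠ 0 ∧ G.mulVec v = μ • v) →
      μ ∈ Set.Icc ℓ u)
    (α : ℕ → ℝ)
    (hα : ∀ j < k, α j =
      2 / ((u + ℓ) + (u - ℓ) * Real.cos ((2 * j + 1) * Real.pi / (2 * k))))
    (Pm : Matrix (Fin msz) (Fin msz) ℝ)
    (hPm : Pm = ((List.range k).map
      (fun j => (1 : Matrix (Fin msz) (Fin msz) ℝ) - α j • G)).prod)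
    (v : Fin msz → ℝ) :
    (Pm.mulVec v) ⬝ᵥ (Pm.mulVec v) ≤
      (2 * ((Real.sqrt u - Real.sqrt ℓ) / (Real.sqrt u + Real.sqrt ℓ)) ^ k) ^ 2 *
        (v ⬝ᵥ v) :=
  stmt15_general msz k ℓ u hℓ hlu G hG hspec α hα Pm hPm v
end

section
/- Among all real polynomials P of degree k with P(0) = 1, the minimum over P of max_{x∈[ℓ,u]}|P(x)| (for 0 < ℓ < u) equals 1/T_k^{(ℓ,u)}(0), achieved by P*(x) = T_k^{(ℓ,u)}(x)/T_k^{(ℓ,u)}(0), and this minimum is at most 2·((√u−√ℓ)/(√u+√ℓ))^k, where T_k^{(ℓ,u)}(x) = T_k((2x)/(u−ℓ) − (u+ℓ)/(u−ℓ)). -/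
open Polynomial Real

/-!
`Q = T_k ∘ L`, with `L` the affine map of `[ℓ, u]` onto `[-1, 1]`, is bounded by `1` on `[ℓ, u]`
and takes the values `±1` alternately at the `k + 1` images of the extremal points of `T_k`.
If `P` of degree `k` with `P 0 = 1` had `|P| < 1 / |Q 0|` on `[ℓ, u]`, then `Q - Q 0 • P` would
alternate in sign at these points, hence have `k` roots in `(ℓ, u)`, and also vanish at `0`:
too many roots for a nonzero polynomial of degree `≤ k`.
For the bound, `ρ = (√u - √ℓ) / (√u + √ℓ)` satisfies `(ρ + ρ⁻¹) / 2 = (u + ℓ) / (u - ℓ) = -L 0`,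
and `T_k ((ρ + ρ⁻¹) / 2) = (ρ ^ k + ρ⁻¹ ^ k) / 2 ≥ ρ⁻¹ ^ k / 2` (write `ρ = exp t` and use `cosh`).
-/

namespace Polynomial

theorem exists_isRoot_mem_Ioo_of_eval_mul_neg (p : ℝ[X]) {a b : ℝ} (hab : a < b)
    (h : p.eval a * p.eval b < 0) : ∃ r ∈ Set.Ioo a b, p.IsRoot r := by
  have hp : ContinuousOn (fun x ↦ p.eval x) (Set.Icc a b) := p.continuousOn
  rcases mul_neg_iff.1 h with ⟨ha, hb⟩ | ⟨ha, hb⟩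
  · exact intermediate_value_Ioo' hab.le hp ⟨hb, ha⟩
  · exact intermediate_value_Ioo hab.le hp ⟨ha, hb⟩

section Alternation

variable {S : ℝ[X]} {k : ℕ} {x : ℕ → ℝ}

theorem eval_mul_eval_succ_neg_of_alternating {j : ℕ}
    (hj : 0 < (-1) ^ j * S.eval (x j)) (hj' : 0 < (-1) ^ (j + 1) * S.eval (x (j + 1))) :
    S.eval (x (j + 1)) * S.eval (x j) < 0 := by
  have hsq : ((-1 : ℝ) ^ j) * (-1) ^ j = 1 := by rw [← mul_pow]; norm_num
  rw [pow_succ] at hj'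
  nlinarith [mul_pos hj hj']

theorem exists_strictAnti_isRoot_of_alternating (hx : StrictAntiOn x (Set.Iic k))
    (halt : ∀ j ≤ k, 0 < (-1) ^ j * S.eval (x j)) :
    ∃ r : Fin k → ℝ, StrictAnti r ∧ ∀ j, r j ∈ Set.Ioo (x k) (x 0) ∧ S.IsRoot (r j) := by
  have hroot (j : Fin k) : ∃ r ∈ Set.Ioo (x (j + 1)) (x j), S.IsRoot r :=
    S.exists_isRoot_mem_Ioo_of_eval_mul_neg
      (hx (Set.mem_Iic.2 j.2.le) (Set.mem_Iic.2 j.2) (Nat.lt_succ_self j))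
      (eval_mul_eval_succ_neg_of_alternating (halt j j.2.le) (halt (j + 1) j.2))
  choose r hr hroot using hroot
  have hx_anti : AntitoneOn x (Set.Iic k) := hx.antitoneOn
  refine ⟨r, fun i j hij ↦ ?_, fun j ↦ ⟨⟨?_, ?_⟩, hroot j⟩⟩
  · calc r j < x j := (hr j).2
      _ ≤ x (i + 1) := hx_anti (Set.mem_Iic.2 i.2) (Set.mem_Iic.2 j.2.le) hij
      _ < r i := (hr i).1
  · calc x k ≤ x (j + 1) := hx_anti (Set.mem_Iic.2 j.2) Set.self_mem_Iic j.2
      _ < r j := (hr j).1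
  · calc r j < x j := (hr j).2
      _ ≤ x 0 := hx_anti (Set.mem_Iic.2 (Nat.zero_le k)) (Set.mem_Iic.2 j.2.le) (Nat.zero_le j)

theorem eval_ne_zero_of_alternating (hS : S.natDegree ≤ k) (hx : StrictAntiOn x (Set.Iic k))
    (halt : ∀ j ≤ k, 0 < (-1) ^ j * S.eval (x j)) {a : ℝ} (ha : a ∉ Set.Ioo (x k) (x 0)) :
    S.eval a ≠ 0 := by
  intro hSa
  obtain ⟨r, hr_anti, hr⟩ := exists_strictAnti_isRoot_of_alternating hx halt
  have hinj : Function.Injective (Fin.cons a r : Fin (k + 1) → ℝ) :=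
    Fin.cons_injective_of_injective (by rintro ⟨j, rfl⟩; exact ha (hr j).1) hr_anti.injective
  have hS0 : S = 0 := eq_zero_of_natDegree_lt_card_of_eval_eq_zero S hinj
    (Fin.cases hSa fun j ↦ (hr j).2) (by simpa using Nat.lt_succ_of_le hS)
  simpa [hS0] using halt 0 (Nat.zero_le k)

theorem exists_one_le_abs_eval_of_equioscillation {P Q : ℝ[X]} (hP : P.natDegree ≤ k)
    (hQ : Q.natDegree ≤ k) (hx : StrictAntiOn x (Set.Iic k))
    (hQx : ∀ j ≤ k, Q.eval (x j) = (-1) ^ j) {a : ℝ} (ha : a ∉ Set.Ioo (x k) (x 0))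
    (hPa : P.eval a = Q.eval a) : ∃ j ≤ k, 1 ≤ |P.eval (x j)| := by
  by_contra! hlt
  refine eval_ne_zero_of_alternating ((natDegree_sub_le_of_le hQ hP).trans_eq (max_self k)) hx
    (fun j hj ↦ ?_) ha (by rw [eval_sub, hPa, sub_self])
  have hsign : (-1) ^ j * P.eval (x j) < 1 :=
    (le_abs_self _).trans_lt (by rw [abs_mul, abs_neg_one_pow, one_mul]; exact hlt j hj)
  have hsq : ((-1 : ℝ) ^ j) * (-1) ^ j = 1 := by rw [← mul_pow]; norm_num
  rw [eval_sub, hQx j hj, mul_sub, hsq]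
  linarith

end Alternation

end Polynomial

namespace Polynomial.Chebyshev

theorem eval_T_real_half_add_inv {ρ : ℝ} (hρ : 0 < ρ) (n : ℕ) :
    (T ℝ n).eval ((ρ + ρ⁻¹) / 2) = (ρ ^ n + ρ⁻¹ ^ n) / 2 := by
  have hcosh : (ρ + ρ⁻¹) / 2 = cosh (log ρ) := by rw [cosh_eq, exp_neg, exp_log hρ]
  rw [hcosh, T_real_cosh, cosh_eq, Int.cast_natCast, ← mul_neg, exp_nat_mul, exp_nat_mul,
    exp_neg, exp_log hρ]

end Polynomial.Chebyshev

theorem half_add_inv_sub_div_add {a b : ℝ} (hsub : a - b ≠ 0) (hadd : a + b ≠ 0) :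
    ((a - b) / (a + b) + ((a - b) / (a + b))⁻¹) / 2 = (a ^ 2 + b ^ 2) / (a ^ 2 - b ^ 2) := by
  have hsq : a ^ 2 - b ^ 2 = (a - b) * (a + b) := by ring
  rw [hsq, inv_div]
  field_simp
  ring

noncomputable def normalizeIcc (ℓ u : ℝ) : ℝ[X] :=
  C (2 / (u - ℓ)) * X - C ((u + ℓ) / (u - ℓ))

theorem eval_normalizeIcc (ℓ u x : ℝ) :
    (normalizeIcc ℓ u).eval x = (2 * x - (u + ℓ)) / (u - ℓ) := by
  simp only [normalizeIcc, eval_sub, eval_mul, eval_C, eval_X]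
  ring

theorem natDegree_normalizeIcc {ℓ u : ℝ} (h : ℓ ≠ u) : (normalizeIcc ℓ u).natDegree = 1 := by
  rw [normalizeIcc, sub_eq_add_neg, ← C_neg]
  exact natDegree_linear (div_ne_zero two_ne_zero (sub_ne_zero.2 h.symm))

theorem abs_eval_normalizeIcc_le_one {ℓ u x : ℝ} (hlu : ℓ < u) (hx : x ∈ Set.Icc ℓ u) :
    |(normalizeIcc ℓ u).eval x| ≤ 1 := by
  have hul : 0 < u - ℓ := sub_pos.2 hlu
  rw [eval_normalizeIcc, abs_div, abs_of_pos hul, div_le_one hul, abs_le]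
  constructor <;> linarith [hx.1, hx.2]

theorem eval_normalizeIcc_zero {ℓ u : ℝ} :
    (normalizeIcc ℓ u).eval 0 = -((u + ℓ) / (u - ℓ)) := by
  rw [eval_normalizeIcc]
  ring

noncomputable def iccNode (ℓ u : ℝ) (k j : ℕ) : ℝ :=
  ((u - ℓ) * Chebyshev.node k j + (u + ℓ)) / 2

theorem iccNode_mem_Icc {ℓ u : ℝ} (hlu : ℓ < u) (k j : ℕ) : iccNode ℓ u k j ∈ Set.Icc ℓ u := by
  obtain ⟨h₁, h₂⟩ := Chebyshev.node_mem_Icc (n := k) (i := j)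
  have hul : 0 < u - ℓ := sub_pos.2 hlu
  constructor <;> unfold iccNode <;> nlinarith

theorem strictAntiOn_iccNode {ℓ u : ℝ} (hlu : ℓ < u) (k : ℕ) :
    StrictAntiOn (iccNode ℓ u k) (Set.Iic k) := fun i _ j hj hij ↦ by
  have := Chebyshev.node_lt hj hij
  have hul : 0 < u - ℓ := sub_pos.2 hlu
  unfold iccNode
  nlinarith

theorem eval_T_comp_normalizeIcc_iccNode {ℓ u : ℝ} (hlu : ℓ < u) {k j : ℕ} (hj : j ≤ k) :
    ((Chebyshev.T ℝ k).comp (normalizeIcc ℓ u)).eval (iccNode ℓ u k j) = (-1) ^ j := by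
  have hul : u - ℓ ≠ 0 := (sub_pos.2 hlu).ne'
  rw [eval_comp, eval_normalizeIcc, iccNode,
    show (2 * (((u - ℓ) * Chebyshev.node k j + (u + ℓ)) / 2) - (u + ℓ)) / (u - ℓ)
      = Chebyshev.node k j by field_simp; ring]
  exact Chebyshev.eval_T_real_node (Finset.mem_Iic.2 hj)

theorem abs_eval_T_comp_normalizeIcc_le_one {ℓ u x : ℝ} (hlu : ℓ < u) (hx : x ∈ Set.Icc ℓ u)
    (k : ℕ) : |((Chebyshev.T ℝ k).comp (normalizeIcc ℓ u)).eval x| ≤ 1 := by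
  rw [eval_comp]
  exact Chebyshev.abs_eval_T_real_le_one k (abs_eval_normalizeIcc_le_one hlu hx)

theorem one_le_abs_eval_T_comp_normalizeIcc_zero {ℓ u : ℝ} (hℓ : 0 ≤ ℓ) (hlu : ℓ < u) (k : ℕ) :
    1 ≤ |((Chebyshev.T ℝ k).comp (normalizeIcc ℓ u)).eval 0| := by
  have hul : 0 < u - ℓ := sub_pos.2 hlu
  rw [eval_comp]
  refine Chebyshev.one_le_abs_eval_T_real k ?_
  rw [eval_normalizeIcc_zero, abs_neg, abs_div, abs_of_pos hul, one_le_div hul]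
  exact (by linarith : u - ℓ ≤ u + ℓ).trans (le_abs_self _)

theorem inv_abs_eval_T_comp_normalizeIcc_zero_le {ℓ u : ℝ} (hℓ : 0 < ℓ) (hlu : ℓ < u) (k : ℕ) :
    |((Chebyshev.T ℝ k).comp (normalizeIcc ℓ u)).eval 0|⁻¹ ≤
      2 * ((√u - √ℓ) / (√u + √ℓ)) ^ k := by
  set ρ := (√u - √ℓ) / (√u + √ℓ) with hρ_def
  have hsqrt : √ℓ < √u := Real.sqrt_lt_sqrt hℓ.le hlu
  have hsqrtℓ : 0 < √ℓ := Real.sqrt_pos.2 hℓ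
  have hρ : 0 < ρ := div_pos (by linarith) (by linarith)
  have hval : (normalizeIcc ℓ u).eval 0 = -((ρ + ρ⁻¹) / 2) := by
    rw [eval_normalizeIcc_zero, hρ_def, half_add_inv_sub_div_add (by linarith) (by linarith),
      Real.sq_sqrt hℓ.le, Real.sq_sqrt (hℓ.trans hlu).le]
  have habs : |((Chebyshev.T ℝ k).comp (normalizeIcc ℓ u)).eval 0| = (ρ ^ k + ρ⁻¹ ^ k) / 2 := by
    rw [eval_comp, hval, Chebyshev.T_eval_neg, Chebyshev.eval_T_real_half_add_inv hρ, abs_mul]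
    simp only [Int.coe_negOnePow, Int.natAbs_natCast, abs_pow, abs_neg, abs_one, one_pow, one_mul]
    exact abs_of_pos (by positivity)
  calc |((Chebyshev.T ℝ k).comp (normalizeIcc ℓ u)).eval 0|⁻¹ = 2 / (ρ ^ k + ρ⁻¹ ^ k) := by
        rw [habs, inv_div]
    _ ≤ 2 / ρ⁻¹ ^ k := div_le_div_of_nonneg_left zero_le_two (by positivity)
        (le_add_of_nonneg_left (by positivity))
    _ = 2 * ρ ^ k := by rw [inv_pow, div_inv_eq_mul]

theorem stmt16_general (k : ℕ) (ℓ u : ℝ) (hℓ : 0 < ℓ) (hlu : ℓ < u)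
    (Q : Polynomial ℝ)
    (hQ : Q = (Polynomial.Chebyshev.T ℝ (k : ℤ)).comp
      (Polynomial.C (2 / (u - ℓ)) * Polynomial.X - Polynomial.C ((u + ℓ) / (u - ℓ)))) :
    (∀ P : Polynomial ℝ, P.natDegree = k → P.eval 0 = 1 →
        ∃ x ∈ Set.Icc ℓ u, (|Q.eval 0|)⁻¹ ≤ |P.eval x|) ∧
    ((Q * Polynomial.C (Q.eval 0)⁻¹).natDegree = k ∧
      (Q * Polynomial.C (Q.eval 0)⁻¹).eval 0 = 1 ∧
      ∀ x ∈ Set.Icc ℓ u, |(Q * Polynomial.C (Q.eval 0)⁻¹).eval x| ≤ (|Q.eval 0|)⁻¹) ∧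
    (|Q.eval 0|)⁻¹ ≤
      2 * ((Real.sqrt u - Real.sqrt ℓ) / (Real.sqrt u + Real.sqrt ℓ)) ^ k := by
  replace hQ : Q = (Chebyshev.T ℝ k).comp (normalizeIcc ℓ u) := hQ
  have hQdeg : Q.natDegree = k := by
    rw [hQ, natDegree_comp, Chebyshev.natDegree_T, natDegree_normalizeIcc hlu.ne, mul_one,
      Int.natAbs_natCast]
  have hQ0 : 1 ≤ |Q.eval 0| := hQ ▸ one_le_abs_eval_T_comp_normalizeIcc_zero hℓ.le hlu k
  have hQ0ne : Q.eval 0 ≠ 0 := abs_pos.1 (zero_lt_one.trans_le hQ0)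
  refine ⟨fun P hPdeg hP0 ↦ ?_, ⟨?_, ?_, fun x hx ↦ ?_⟩,
    hQ ▸ inv_abs_eval_T_comp_normalizeIcc_zero_le hℓ hlu k⟩
  · obtain ⟨j, -, hj⟩ := exists_one_le_abs_eval_of_equioscillation
      ((natDegree_C_mul_le (Q.eval 0) P).trans hPdeg.le) hQdeg.le (strictAntiOn_iccNode hlu k)
      (fun j hj ↦ hQ ▸ eval_T_comp_normalizeIcc_iccNode hlu hj)
      (Set.notMem_Ioo_of_le (hℓ.trans_le (iccNode_mem_Icc hlu k k).1).le)
      (by rw [eval_mul, eval_C, hP0, mul_one])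
    refine ⟨iccNode ℓ u k j, iccNode_mem_Icc hlu k j, ?_⟩
    rwa [eval_mul, eval_C, abs_mul, ← inv_mul_le_iff₀ (abs_pos.2 hQ0ne), mul_one] at hj
  · rw [natDegree_mul_C (inv_ne_zero hQ0ne), hQdeg]
  · rw [eval_mul, eval_C, mul_inv_cancel₀ hQ0ne]
  · rw [eval_mul, eval_C, abs_mul, abs_inv]
    exact mul_le_of_le_one_left (by positivity)
      (hQ ▸ abs_eval_T_comp_normalizeIcc_le_one hlu hx k)

theorem stmt16 (k : ℕ) (hk : 1 ≤ k) (ℓ u : ℝ) (hℓ : 0 < ℓ) (hlu : ℓ < u)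
    (Q : Polynomial ℝ)
    (hQ : Q = (Polynomial.Chebyshev.T ℝ (k : ℤ)).comp
      (Polynomial.C (2 / (u - ℓ)) * Polynomial.X - Polynomial.C ((u + ℓ) / (u - ℓ)))) :
    (∀ P : Polynomial ℝ, P.natDegree = k → P.eval 0 = 1 →
        ∃ x ∈ Set.Icc ℓ u, (|Q.eval 0|)⁻¹ ≤ |P.eval x|) ∧
    ((Q * Polynomial.C (Q.eval 0)⁻¹).natDegree = k ∧
      (Q * Polynomial.C (Q.eval 0)⁻¹).eval 0 = 1 ∧
      ∀ x ∈ Set.Icc ℓ u, |(Q * Polynomial.C (Q.eval 0)⁻¹).eval x| ≤ (|Q.eval 0|)⁻¹) ∧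
    (|Q.eval 0|)⁻¹ ≤
      2 * ((Real.sqrt u - Real.sqrt ℓ) / (Real.sqrt u + Real.sqrt ℓ)) ^ k :=
  stmt16_general k ℓ u hℓ hlu Q hQ
end
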